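/- arXiv:2009.14521 — 2 statements merged into one kernel-verified Lean document; each statement's English description precedes it below -/
import Mathlib

section
/- Let n ≥ 2, ε > 0, and let a : Fin n → ℝ have strictly positive maximum. Let w > 0 satisfy w·exp(w) = exp(−1). If λ ≥ (w + (n−2)/e)/ε, then (max_i a_i) − (∑_i a_i·exp(λ·a_i)) / (∑_i exp(λ·a_i)) ≤ ε; that is, the logit softmax value is within ε of the maximum. -/
/-!
Let `j` maximise `a` and `k ≠ j`. Writing `M - softmax = ∑ᵢ (M - aᵢ) e^{λaᵢ} / ∑ᵢ e^{λaᵢ}`, the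
term `i = j` vanishes, each of the `n - 2` terms with `i ≠ j, k` is at most `e^{λM} / (λe)` because
`t ≤ e^{t-1}`, and the term `i = k` is at most `(w/λ)(e^{λM} + e^{λaₖ})` because `t ≤ w (eᵗ + 1)`
when `w eʷ = e⁻¹`. Hence the numerator is at most `(w + (n-2)/e)/λ` times `e^{λaⱼ} + e^{λaₖ}`,
which is at most `ε` times the denominator.
-/

open Real Finset

lemma sub_sum_mul_div_sum {ι K : Type*} [Field K] (s : Finset ι) (c : K) (a x : ι → K)
    (hx : ∑ i ∈ s, x i ≠ 0) :
    c - (∑ i ∈ s, a i * x i) / ∑ i ∈ s, x i = (∑ i ∈ s, (c - a i) * x i) / ∑ i ∈ s, x i := by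
  rw [eq_div_iff hx, sub_mul, div_mul_cancel₀ _ hx, mul_sum, ← sum_sub_distrib]
  exact sum_congr rfl fun i _ => by ring

lemma mul_exp_le_exp_add_div_exp_one (t s : ℝ) : t * exp s ≤ exp (t + s) / exp 1 := by
  calc t * exp s ≤ exp (t - 1) * exp s :=
        mul_le_mul_of_nonneg_right (by linarith [add_one_le_exp (t - 1)]) (exp_pos s).le
    _ = exp (t + s) / exp 1 := by rw [← exp_add, ← exp_sub]; ring_nf

lemma eq_exp_neg_one_sub_of_mul_exp_eq {w : ℝ} (hwe : w * exp w = exp (-1)) : w = exp (-1 - w) := by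
  rw [exp_sub, ← hwe, mul_div_cancel_right₀ _ (exp_pos w).ne']

lemma pos_of_mul_exp_eq {w : ℝ} (hwe : w * exp w = exp (-1)) : 0 < w :=
  eq_exp_neg_one_sub_of_mul_exp_eq hwe ▸ exp_pos _

lemma mul_exp_le_of_mul_exp_eq {w : ℝ} (hwe : w * exp w = exp (-1)) (t s : ℝ) :
    t * exp s ≤ w * (exp (t + s) + exp s) := by
  have h : t - w ≤ w * exp t :=
    calc t - w ≤ exp (t - 1 - w) := by linarith [add_one_le_exp (t - 1 - w)]
      _ = exp (-1 - w) * exp t := by rw [← exp_add]; ring_nf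
      _ = w * exp t := by rw [← eq_exp_neg_one_sub_of_mul_exp_eq hwe]
  calc t * exp s ≤ (w * exp t + w) * exp s :=
        mul_le_mul_of_nonneg_right (by linarith) (exp_pos s).le
    _ = w * (exp (t + s) + exp s) := by rw [exp_add]; ring

lemma mul_sum_sub_mul_exp_le {ι : Type*} [Fintype ι] [DecidableEq ι] {w : ℝ}
    (hwe : w * exp w = exp (-1)) (a : ι → ℝ) (lam : ℝ) {j k : ι} (hjk : j ≠ k) :
    lam * ∑ i, (a j - a i) * exp (lam * a i) ≤
      (w + ((Fintype.card ι : ℝ) - 2) / exp 1) * ∑ i, exp (lam * a i) := by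
  have hw := pos_of_mul_exp_eq hwe
  have hpair : {j, k} ⊆ (univ : Finset ι) := subset_univ _
  have hcard : (#(univ \ {j, k}) : ℝ) = (Fintype.card ι : ℝ) - 2 := by
    rw [card_sdiff_of_subset hpair, card_univ, card_pair hjk, Nat.cast_sub]
    · norm_num
    · exact card_pair hjk ▸ card_le_univ {j, k}
  have hk : lam * ((a j - a k) * exp (lam * a k)) ≤ w * (exp (lam * a j) + exp (lam * a k)) := by
    have := mul_exp_le_of_mul_exp_eq hwe (lam * (a j - a k)) (lam * a k)
    rw [show lam * (a j - a k) + lam * a k = lam * a j by ring] at this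
    linarith
  have hrest : ∀ i, lam * ((a j - a i) * exp (lam * a i)) ≤ exp (lam * a j) / exp 1 := by
    intro i
    have := mul_exp_le_exp_add_div_exp_one (lam * (a j - a i)) (lam * a i)
    rw [show lam * (a j - a i) + lam * a i = lam * a j by ring] at this
    linarith
  have hrest_sum : lam * ∑ i ∈ univ \ {j, k}, (a j - a i) * exp (lam * a i) ≤
      ((Fintype.card ι : ℝ) - 2) * (exp (lam * a j) / exp 1) := by
    rw [mul_sum, ← hcard, ← nsmul_eq_mul]
    exact sum_le_card_nsmul _ _ _ fun i _ => hrest i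
  have hpair_le : exp (lam * a j) + exp (lam * a k) ≤ ∑ i, exp (lam * a i) := by
    rw [← sum_pair hjk (f := fun i => exp (lam * a i))]
    exact sum_le_sum_of_subset_of_nonneg hpair fun i _ _ => (exp_pos _).le
  rw [← sum_sdiff hpair, sum_pair hjk, sub_self, zero_mul, zero_add, mul_add]
  have hcard_nonneg : 0 ≤ (Fintype.card ι : ℝ) - 2 := hcard ▸ Nat.cast_nonneg _
  calc _ ≤ ((Fintype.card ι : ℝ) - 2) * (exp (lam * a j) / exp 1) +
        w * (exp (lam * a j) + exp (lam * a k)) := add_le_add hrest_sum hk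
    _ ≤ (w + ((Fintype.card ι : ℝ) - 2) / exp 1) * (exp (lam * a j) + exp (lam * a k)) := by
        rw [mul_div_left_comm]
        nlinarith [div_nonneg hcard_nonneg (exp_pos 1).le, exp_pos (lam * a k)]
    _ ≤ _ := mul_le_mul_of_nonneg_left hpair_le (by positivity)

theorem softmax_eps_close_general (n : ℕ) (eps : ℝ) (heps : 0 < eps)
    (a : Fin (n + 2) → ℝ)
    (w : ℝ) (hwe : w * Real.exp w = Real.exp (-1))
    (lam : ℝ)
    (hlam : (w + (((n + 2 : ℕ) : ℝ) - 2) / Real.exp 1) / eps ≤ lam) :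
    Finset.univ.sup' Finset.univ_nonempty a -
        (∑ i, a i * Real.exp (lam * a i)) / (∑ i, Real.exp (lam * a i)) ≤ eps := by
  obtain ⟨j, -, hj⟩ := exists_mem_eq_sup' univ_nonempty a
  obtain ⟨k, hkj⟩ := exists_ne j
  have hcard : ((n + 2 : ℕ) : ℝ) - 2 = n := by push_cast; ring
  have hgap := mul_sum_sub_mul_exp_le hwe a lam hkj.symm
  rw [Fintype.card_fin, hcard] at hgap
  rw [hcard, div_le_iff₀ heps, mul_comm] at hlam
  have hw := pos_of_mul_exp_eq hwe
  have hlam_pos : 0 < lam :=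
    pos_of_mul_pos_right ((by positivity : 0 < w + n / exp 1).trans_le hlam) heps.le
  have hS : 0 < ∑ i, exp (lam * a i) := sum_pos (fun i _ => exp_pos _) univ_nonempty
  rw [hj, sub_sum_mul_div_sum _ _ _ _ hS.ne', div_le_iff₀ hS]
  refine le_of_mul_le_mul_left ?_ hlam_pos
  linarith [mul_le_mul_of_nonneg_right hlam hS.le]

/-- For `λ ≥ (W(1/e) + (n-2)/e)/ε`, the logit softmax of `n ≥ 2` (here `n + 2`)
utilities with strictly positive maximum is within `ε` of the maximum. -/
theorem softmax_eps_close (n : ℕ) (eps : ℝ) (heps : 0 < eps)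
    (a : Fin (n + 2) → ℝ)
    (hmax : 0 < Finset.univ.sup' Finset.univ_nonempty a)
    (w : ℝ) (hw : 0 < w) (hwe : w * Real.exp w = Real.exp (-1))
    (lam : ℝ)
    (hlam : (w + (((n + 2 : ℕ) : ℝ) - 2) / Real.exp 1) / eps ≤ lam) :
    Finset.univ.sup' Finset.univ_nonempty a -
        (∑ i, a i * Real.exp (lam * a i)) / (∑ i, Real.exp (lam * a i)) ≤ eps :=
  softmax_eps_close_general n eps heps a w hwe lam hlam
end

section
/- Consider a two-player normal-form game where the leader has m actions, the follower has n ≥ 2 actions, with leader utility u₁ : Fin m → Fin n → ℝ and follower utility u₂ : Fin m → Fin n → ℝ, and assume u₂(i,j) > 0 for all i, j. For a leader mixed strategy σ in the standard simplex over Fin m, let v_j(σ) = ∑_i σ_i·u₂(i,j) be the follower's expected utility of action j, and let LQR_λ(σ)_j = exp(λ·v_j(σ)) / ∑_k exp(λ·v_k(σ)) be the follower's logit quantal response. Let ε > 0, let w > 0 satisfy w·exp(w) = exp(−1), and suppose λ ≥ (w + (n−2)/e)/ε. If σ* is a leader strategy such that ∑_j LQR_λ(σ*)_j·(∑_i σ*_i·u₁(i,j))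 ≥ ∑_j LQR_λ(σ*)_j·(∑_i σ_i·u₁(i,j)) for every leader strategy σ (i.e., (σ*, LQR_λ(σ*)) is a Quantal Nash Equilibrium), then the profile (σ*, LQR_λ(σ*)) is an ε-Nash equilibrium: the leader's strategy is an exact best response, and the follower's strategy satisfies ∑_j LQR_λ(σ*)_j·v_j(σ*) ≥ (max_j v_j(σ*)) − ε. -/
/-!
Write `M = maxⱼ vⱼ` and `xⱼ = λ (M - vⱼ) ≥ 0`, so that `x_{j₀} = 0` for a best reply `j₀`.
The follower's regret under the logit response is `(∑ⱼ xⱼ e^{-xⱼ}) / (λ ∑ⱼ e^{-xⱼ})`.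
Every term `x e^{-x}` is at most `1/e`, while the term of one further action `j₁` is charged
against `1 + e^{-x_{j₁}} ≤ ∑ⱼ e^{-xⱼ}`, which costs only `w = maxₓ x / (1 + eˣ)`.
Hence the regret is at most `(w + (n - 2)/e) / λ ≤ ε`.
-/

open Real Finset

noncomputable def softmax {ι : Type*} [Fintype ι] (x : ι → ℝ) (j : ι) : ℝ :=
  exp (x j) / ∑ k, exp (x k)

namespace Real

theorem pos_of_mul_exp_eq_exp_neg_one {w : ℝ} (hw : w * exp w = exp (-1)) : 0 < w :=
  pos_of_mul_pos_left (hw ▸ exp_pos (-1)) (exp_pos w).le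

/-- Here `w = W(1/e)` is the maximum of `x ↦ x / (1 + eˣ)`, attained at `x = 1 + w`. -/
theorem mul_exp_neg_le_mul_one_add_exp_neg {w : ℝ} (hw : w * exp w = exp (-1)) (x : ℝ) :
    x * exp (-x) ≤ w * (1 + exp (-x)) := by
  have hexp : exp (x - (1 + w)) = w * exp x := by
    rw [show x - (1 + w) = x + -1 + -w by ring, exp_add, exp_add, ← hw, exp_neg]
    field_simp
  have hx : x ≤ w * (1 + exp x) := by linarith [add_one_le_exp (x - (1 + w))]
  calc x * exp (-x) ≤ w * (1 + exp x) * exp (-x) := by gcongr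
    _ = w * (1 + exp (-x)) := by rw [mul_assoc, add_mul, ← exp_add]; simp [add_comm]

theorem sum_mul_exp_neg_le {ι : Type*} [Fintype ι] {w : ℝ} (hw : w * exp w = exp (-1))
    (x : ι → ℝ) {j₀ j₁ : ι} (hx₀ : x j₀ = 0) (hne : j₁ ≠ j₀) :
    ∑ j, x j * exp (-x j) ≤ (w + (Fintype.card ι - 2) / exp 1) * ∑ j, exp (-x j) := by
  classical
  set U := ∑ j, exp (-x j)
  set rest := univ \ {j₀, j₁}
  have hpair : ({j₀, j₁} : Finset ι) ⊆ univ := subset_univ _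
  have hU : 1 + exp (-x j₁) ≤ U := by
    have := sum_le_sum_of_subset_of_nonneg hpair fun j _ _ => (exp_pos (-x j)).le
    rwa [sum_pair hne.symm, hx₀, neg_zero, exp_zero] at this
  have hcard : (#rest : ℝ) = Fintype.card ι - 2 := by
    have := card_sdiff_add_card_eq_card hpair
    rw [card_pair hne.symm, card_univ] at this
    rw [← this]; push_cast; ring
  have hrest : ∑ j ∈ rest, x j * exp (-x j) ≤ (Fintype.card ι - 2) * exp (-1) := by
    have := sum_le_card_nsmul rest _ _ fun j _ => mul_exp_neg_le_exp_neg_one (x j)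
    rwa [nsmul_eq_mul, hcard] at this
  have hrest₀ : (0 : ℝ) ≤ Fintype.card ι - 2 := hcard ▸ Nat.cast_nonneg _
  have hw₀ := pos_of_mul_exp_eq_exp_neg_one hw
  calc ∑ j, x j * exp (-x j)
      = x j₁ * exp (-x j₁) + ∑ j ∈ rest, x j * exp (-x j) := by
        rw [← sum_sdiff hpair, sum_pair hne.symm, hx₀, zero_mul, zero_add, add_comm]
    _ ≤ w * U + (Fintype.card ι - 2) * exp (-1) * U := by
        refine add_le_add ((mul_exp_neg_le_mul_one_add_exp_neg hw (x j₁)).trans (by gcongr))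
          (hrest.trans (le_mul_of_one_le_right (by positivity) ?_))
        linarith [exp_pos (-x j₁)]
    _ = (w + (Fintype.card ι - 2) / exp 1) * U := by rw [exp_neg]; ring

end Real

section softmax

variable {ι : Type*} [Fintype ι]

theorem softmax_add_const (x : ι → ℝ) (c : ℝ) : softmax (fun j => x j + c) = softmax x := by
  funext j
  simp only [softmax, exp_add, ← sum_mul]
  exact mul_div_mul_right _ _ (exp_pos c).ne'

theorem sum_softmax [Nonempty ι] (x : ι → ℝ) : ∑ j, softmax x j = 1 := by
  simp only [softmax, ← sum_div]
  exact div_self (sum_pos (fun j _ => exp_pos (x j)) univ_nonempty).ne'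

theorem sum_softmax_mul (x f : ι → ℝ) :
    ∑ j, softmax x j * f j = (∑ j, exp (x j) * f j) / ∑ j, exp (x j) := by
  simp only [softmax, sum_div, div_mul_eq_mul_div]

theorem sup'_sub_sum_softmax_mul_le [Nontrivial ι] {w : ℝ} (hw : w * exp w = exp (-1))
    {lam : ℝ} (hlam : 0 < lam) (v : ι → ℝ) :
    univ.sup' univ_nonempty v - ∑ j, softmax (fun j => lam * v j) j * v j ≤
      (w + (Fintype.card ι - 2) / exp 1) / lam := by
  set M := univ.sup' univ_nonempty v
  obtain ⟨j₀, -, hj₀⟩ := exists_mem_eq_sup' univ_nonempty v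
  obtain ⟨j₁, hne⟩ := exists_ne j₀
  set x : ι → ℝ := fun j => lam * (M - v j)
  have hshift : softmax (fun j => lam * v j) = softmax (fun j => -x j) := by
    rw [← softmax_add_const (fun j => -x j) (lam * M)]
    simp only [x]; ring_nf
  have hregret : (M - ∑ j, softmax (fun j => -x j) j * v j) * lam =
      ∑ j, softmax (fun j => -x j) j * x j := by
    rw [sum_congr rfl fun j _ => show softmax (fun j => -x j) j * x j =
        lam * M * softmax (fun j => -x j) j - lam * (softmax (fun j => -x j) j * v j) by ring,
      sum_sub_distrib, ← mul_sum, ← mul_sum, sum_softmax]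
    ring
  rw [hshift, le_div_iff₀ hlam, hregret, sum_softmax_mul,
    div_le_iff₀ (sum_pos (fun j _ => exp_pos _) univ_nonempty)]
  simpa only [mul_comm (exp _)] using sum_mul_exp_neg_le hw x (by simp [x, M, hj₀]) hne

end softmax

open Real Finset in
theorem qne_is_eps_nash_general (m n : ℕ) (u1 : Fin m → Fin (n + 2) → ℝ)
    (eps : ℝ) (heps : 0 < eps)
    (w : ℝ) (hwe : w * Real.exp w = Real.exp (-1))
    (lam : ℝ) (hlam : (w + (((n + 2 : ℕ) : ℝ) - 2) / Real.exp 1) / eps ≤ lam)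
    (v : (Fin m → ℝ) → Fin (n + 2) → ℝ)
    (LQR : (Fin m → ℝ) → Fin (n + 2) → ℝ)
    (hLQR : ∀ σ j, LQR σ j = Real.exp (lam * v σ j) / ∑ k, Real.exp (lam * v σ k))
    (σs : Fin m → ℝ)
    (hQNE : ∀ σ ∈ stdSimplex ℝ (Fin m),
      ∑ j, LQR σs j * (∑ i, σ i * u1 i j) ≤ ∑ j, LQR σs j * (∑ i, σs i * u1 i j)) :
    (∀ σ ∈ stdSimplex ℝ (Fin m),
        ∑ j, LQR σs j * (∑ i, σ i * u1 i j) ≤ ∑ j, LQR σs j * (∑ i, σs i * u1 i j)) ∧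
      Finset.univ.sup' Finset.univ_nonempty (fun j => v σs j) - eps ≤
        ∑ j, LQR σs j * v σs j := by
  refine ⟨hQNE, ?_⟩
  have hLQR' : LQR σs = softmax (fun j => lam * v σs j) := funext (hLQR σs)
  have hC : 0 < w + (((n + 2 : ℕ) : ℝ) - 2) / exp 1 := by
    have := pos_of_mul_exp_eq_exp_neg_one hwe
    push_cast; ring_nf; positivity
  have hlam₀ : 0 < lam := (div_pos hC heps).trans_le hlam
  have hregret := sup'_sub_sum_softmax_mul_le hwe hlam₀ (v σs)
  rw [Fintype.card_fin] at hregret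
  have hCε := (div_le_comm₀ heps hlam₀).1 hlam
  rw [hLQR']
  linarith

open Real Finset in
/-- PPAD-hardness core claim: with `λ ≥ (W(1/e) + (n-2)/e)/ε`, in a game with
strictly positive follower utilities, any Quantal Nash Equilibrium
`(σ*, LQR_λ(σ*))` is an ε-Nash equilibrium: the leader plays an exact best
response and the follower's logit quantal response is an ε-best response. -/
theorem qne_is_eps_nash (m n : ℕ) (u1 u2 : Fin m → Fin (n + 2) → ℝ)
    (hu2 : ∀ i j, 0 < u2 i j)
    (eps : ℝ) (heps : 0 < eps)
    (w : ℝ) (hw : 0 < w) (hwe : w * Real.exp w = Real.exp (-1))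
    (lam : ℝ) (hlam : (w + (((n + 2 : ℕ) : ℝ) - 2) / Real.exp 1) / eps ≤ lam)
    (v : (Fin m → ℝ) → Fin (n + 2) → ℝ)
    (hv : ∀ σ j, v σ j = ∑ i, σ i * u2 i j)
    (LQR : (Fin m → ℝ) → Fin (n + 2) → ℝ)
    (hLQR : ∀ σ j, LQR σ j = Real.exp (lam * v σ j) / ∑ k, Real.exp (lam * v σ k))
    (σs : Fin m → ℝ) (hσs : σs ∈ stdSimplex ℝ (Fin m))
    (hQNE : ∀ σ ∈ stdSimplex ℝ (Fin m),
      ∑ j, LQR σs j * (∑ i, σ i * u1 i j) ≤ ∑ j, LQR σs j * (∑ i, σs i * u1 i j)) :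
    (∀ σ ∈ stdSimplex ℝ (Fin m),
        ∑ j, LQR σs j * (∑ i, σ i * u1 i j) ≤ ∑ j, LQR σs j * (∑ i, σs i * u1 i j)) ∧
      Finset.univ.sup' Finset.univ_nonempty (fun j => v σs j) - eps ≤
        ∑ j, LQR σs j * v σs j :=
  qne_is_eps_nash_general m n u1 eps heps w hwe lam hlam v LQR hLQR σs hQNE
end
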